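/- Let A₁,…,A_m be n×n real symmetric matrices, τ ∈ ℝ^m, and let Γ_τ := {ρ density matrix : Tr(ρ A_j) = τ_j for j = 1,…,m}. Suppose ρ_τ ∈ Γ_τ is positive definite and there exist scalars c, β₁,…,β_m with log ρ_τ = cI + ∑_{j=1}^m β_j A_j. Then ρ_τ is minimax optimal for the quantum log loss: sup_{ρ ∈ Γ_τ} (−Tr(ρ log ρ_τ)) = S(ρ_τ), and for every positive definite density matrix σ, sup_{ρ ∈ Γ_τ} (−Tr(ρ log σ)) ≥ S(ρ_τ). -/

import Mathlib

open Matrix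

/-- The matrix logarithm of a real symmetric matrix, defined by applying `Real.log` to
the eigenvalues in a spectral decomposition (junk value `0` for non-Hermitian input). -/
noncomputable def matLog {n : ℕ} (A : Matrix (Fin n) (Fin n) ℝ) :
    Matrix (Fin n) (Fin n) ℝ :=
  if h : A.IsHermitian then h.cfc Real.log else 0

/-- The von Neumann entropy `S(ρ) := −∑ᵢ λᵢ log λᵢ` of a real symmetric matrix `ρ` with
eigenvalues `λᵢ`, with the convention `0 · log 0 = 0` (note `Real.log 0 = 0`). Junk value
`0` for non-Hermitian input. -/
noncomputable def vnEntropy {n : ℕ} (ρ : Matrix (Fin n) (Fin n) ℝ) : ℝ :=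
  if h : ρ.IsHermitian then -∑ i, h.eigenvalues i * Real.log (h.eigenvalues i) else 0

/-- The constraint set Γ_τ of density matrices ρ with Tr(ρ A_j) = τ_j for all j. -/
def GammaTau {n m : ℕ} (A : Fin m → Matrix (Fin n) (Fin n) ℝ) (τ : Fin m → ℝ) :
    Set (Matrix (Fin n) (Fin n) ℝ) :=
  {ρ | ρ.PosSemidef ∧ ρ.trace = 1 ∧ ∀ j, (ρ * A j).trace = τ j}

/-!
On `Γ_τ` the loss `−Tr(ρ log ρ_τ) = −c − ∑ⱼ βⱼ τⱼ` is constant, because `log ρ_τ` is an affine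
combination of the constraint observables; at `ρ = ρ_τ` this constant is `S(ρ_τ)`. For any other
model `σ`, Klein's inequality `−Tr(ρ_τ log σ) ≥ S(ρ_τ)` bounds the supremum from below by its
value at `ρ_τ`. Klein's inequality itself comes from expanding both traces in the eigenbases
`(uᵢ)` of `ρ_τ` and `(vⱼ)` of `σ`: the overlaps `⟨uᵢ, vⱼ⟩²` form a doubly stochastic matrix, so it
reduces termwise to `x (log y − log x) ≤ y − x`.
-/

open Finset

lemma Real.mul_log_sub_log_le_sub {x y : ℝ} (hx : 0 ≤ x) (hy : 0 < y) :
    x * (Real.log y - Real.log x) ≤ y - x := by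
  rcases hx.eq_or_lt with rfl | hx
  · simpa using hy.le
  have h := Real.log_le_sub_one_of_pos (div_pos hy hx)
  rw [Real.log_div hy.ne' hx.ne'] at h
  calc x * (Real.log y - Real.log x) ≤ x * (y / x - 1) := mul_le_mul_of_nonneg_left h hx.le
    _ = y - x := by field_simp

namespace Matrix

variable {ι : Type*} [Fintype ι] [DecidableEq ι]

lemma map_sq_mem_doublyStochastic_of_mem_unitary {U : Matrix ι ι ℝ}
    (hU : U ∈ unitary (Matrix ι ι ℝ)) : U.map (· ^ 2) ∈ doublyStochastic ℝ ι := by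
  rw [mem_doublyStochastic_iff_sum]
  refine ⟨fun i j => sq_nonneg _, fun i => ?_, fun j => ?_⟩
  · simpa [mul_apply, sq, one_apply] using ext_iff.mpr (Unitary.mul_star_self_of_mem hU) i i
  · simpa [mul_apply, sq, one_apply] using ext_iff.mpr (Unitary.star_mul_self_of_mem hU) j j

lemma trace_conj_diagonal_mul_conj_diagonal (U V : Matrix ι ι ℝ) (d e : ι → ℝ) :
    ((U * diagonal d * star U) * (V * diagonal e * star V)).trace
      = ∑ i, ∑ j, d i * (star U * V) i j ^ 2 * e j := by
  set W := star U * V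
  have hcycle : (U * diagonal d * star U) * (V * diagonal e * star V)
      = U * (diagonal d * W * diagonal e * star V) := by simp only [W, Matrix.mul_assoc]
  have hstar : star V * U = star W := by simp [W, star_mul]
  have hdiag : diagonal d * W * diagonal e = of fun i j => d i * W i j * e j := by
    ext i j; simp [mul_diagonal, diagonal_mul]
  rw [hcycle, trace_mul_comm, Matrix.mul_assoc, hstar, hdiag]
  simp only [trace, diag_apply, mul_apply, of_apply, star_eq_conjTranspose,
    conjTranspose_apply, star_trivial]
  exact sum_congr rfl fun i _ => sum_congr rfl fun j _ => by ring

namespace IsHermitian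

variable {A B : Matrix ι ι ℝ}

lemma eq_conj_diagonal_eigenvalues (hA : A.IsHermitian) :
    A = (hA.eigenvectorUnitary : Matrix ι ι ℝ) * diagonal hA.eigenvalues
      * star (hA.eigenvectorUnitary : Matrix ι ι ℝ) := by
  conv_lhs => rw [hA.spectral_theorem]
  simp [RCLike.ofReal_real_eq_id]

lemma cfc_eq_conj_diagonal (hA : A.IsHermitian) (f : ℝ → ℝ) :
    hA.cfc f = (hA.eigenvectorUnitary : Matrix ι ι ℝ) * diagonal (f ∘ hA.eigenvalues)
      * star (hA.eigenvectorUnitary : Matrix ι ι ℝ) := by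
  simp [IsHermitian.cfc, RCLike.ofReal_real_eq_id]

lemma trace_eq_sum_eigenvalues_real (hA : A.IsHermitian) : A.trace = ∑ i, hA.eigenvalues i := by
  simp [hA.trace_eq_sum_eigenvalues]

/-- `eigenOverlap hA hB i j = ⟨uᵢ, vⱼ⟩²` for the orthonormal eigenvectors `uᵢ` of `A` and
`vⱼ` of `B`. -/
noncomputable def eigenOverlap (hA : A.IsHermitian) (hB : B.IsHermitian) : Matrix ι ι ℝ :=
  (star (hA.eigenvectorUnitary : Matrix ι ι ℝ) * hB.eigenvectorUnitary).map (· ^ 2)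

lemma eigenOverlap_mem_doublyStochastic (hA : A.IsHermitian) (hB : B.IsHermitian) :
    eigenOverlap hA hB ∈ doublyStochastic ℝ ι :=
  map_sq_mem_doublyStochastic_of_mem_unitary <|
    mul_mem (Unitary.star_mem hA.eigenvectorUnitary.2) hB.eigenvectorUnitary.2

lemma eigenOverlap_self (hA : A.IsHermitian) : eigenOverlap hA hA = 1 := by
  ext i j
  simp [eigenOverlap, Unitary.star_mul_self_of_mem hA.eigenvectorUnitary.2, one_apply, ite_pow]

lemma trace_mul_cfc (hA : A.IsHermitian) (hB : B.IsHermitian) (f : ℝ → ℝ) :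
    (A * hB.cfc f).trace
      = ∑ i, ∑ j, hA.eigenvalues i * eigenOverlap hA hB i j * f (hB.eigenvalues j) := by
  conv_lhs => rw [hA.eq_conj_diagonal_eigenvalues, hB.cfc_eq_conj_diagonal]
  rw [trace_conj_diagonal_mul_conj_diagonal]
  rfl

lemma trace_mul_cfc_self (hA : A.IsHermitian) (f : ℝ → ℝ) :
    (A * hA.cfc f).trace = ∑ i, hA.eigenvalues i * f (hA.eigenvalues i) := by
  simp [trace_mul_cfc hA hA, eigenOverlap_self, one_apply]

end IsHermitian

variable {A B : Matrix ι ι ℝ}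

/-- **Klein's inequality**. -/
theorem PosSemidef.trace_mul_cfc_log_le (hA : A.PosSemidef) (hB : B.PosDef) :
    (A * hB.1.cfc Real.log).trace ≤ (A * hA.1.cfc Real.log).trace + B.trace - A.trace := by
  set lam := hA.1.eigenvalues
  set μ := hB.1.eigenvalues
  set P := hA.1.eigenOverlap hB.1
  have hP : P ∈ doublyStochastic ℝ ι := hA.1.eigenOverlap_mem_doublyStochastic hB.1
  rw [hA.1.trace_mul_cfc hB.1, hA.1.trace_mul_cfc_self, hA.1.trace_eq_sum_eigenvalues_real,
    hB.1.trace_eq_sum_eigenvalues_real]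
  calc ∑ i, ∑ j, lam i * P i j * Real.log (μ j)
      ≤ ∑ i, ∑ j, P i j * (lam i * Real.log (lam i) + μ j - lam i) := by
        refine sum_le_sum fun i _ => sum_le_sum fun j _ => ?_
        have := mul_le_mul_of_nonneg_left
          (Real.mul_log_sub_log_le_sub (hA.eigenvalues_nonneg i) (hB.eigenvalues_pos j))
          (nonneg_of_mem_doublyStochastic hP (i := i) (j := j))
        linarith
    _ = ∑ i, lam i * Real.log (lam i) + ∑ j, μ j - ∑ i, lam i := by
        simp only [mul_add, mul_sub, sum_add_distrib, sum_sub_distrib, ← sum_mul,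
          sum_row_of_mem_doublyStochastic hP, one_mul]
        rw [← sum_mulVec_of_mem_doublyStochastic hP (x := μ)]
        rfl

theorem PosSemidef.mul_trace_le_trace_mul_cfc (hA : A.PosSemidef) (hB : B.IsHermitian)
    {f : ℝ → ℝ} {a : ℝ} (hf : ∀ j, a ≤ f (hB.eigenvalues j)) :
    a * A.trace ≤ (A * hB.cfc f).trace := by
  have hP := hA.1.eigenOverlap_mem_doublyStochastic hB
  rw [hA.1.trace_mul_cfc hB, hA.1.trace_eq_sum_eigenvalues_real, mul_sum]
  refine sum_le_sum fun i _ => ?_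
  calc a * hA.1.eigenvalues i
      = ∑ j, hA.1.eigenvalues i * hA.1.eigenOverlap hB i j * a := by
        rw [← sum_mul, ← mul_sum, sum_row_of_mem_doublyStochastic hP, mul_one, mul_comm]
    _ ≤ _ := sum_le_sum fun j _ => mul_le_mul_of_nonneg_left (hf j)
        (mul_nonneg (hA.eigenvalues_nonneg i) (nonneg_of_mem_doublyStochastic hP))

end Matrix

variable {n m : ℕ}

lemma matLog_of_isHermitian {A : Matrix (Fin n) (Fin n) ℝ} (hA : A.IsHermitian) :
    matLog A = hA.cfc Real.log :=
  dif_pos hA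

lemma vnEntropy_eq_neg_trace_mul_matLog {ρ : Matrix (Fin n) (Fin n) ℝ} (hρ : ρ.IsHermitian) :
    vnEntropy ρ = -(ρ * matLog ρ).trace := by
  rw [vnEntropy, dif_pos hρ, matLog_of_isHermitian hρ, hρ.trace_mul_cfc_self]

theorem vnEntropy_le_neg_trace_mul_matLog {ρ σ : Matrix (Fin n) (Fin n) ℝ} (hρ : ρ.PosSemidef)
    (hσ : σ.PosDef) (hρtr : ρ.trace = 1) (hσtr : σ.trace = 1) :
    vnEntropy ρ ≤ -(ρ * matLog σ).trace := by
  have hklein := hρ.trace_mul_cfc_log_le hσ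
  rw [hρtr, hσtr, ← matLog_of_isHermitian] at hklein
  rw [vnEntropy_eq_neg_trace_mul_matLog hρ.1, matLog_of_isHermitian hρ.1]
  linarith

lemma trace_mul_smul_one_add_sum_of_mem_gammaTau {A : Fin m → Matrix (Fin n) (Fin n) ℝ}
    {τ : Fin m → ℝ} {ρ : Matrix (Fin n) (Fin n) ℝ} (hρ : ρ ∈ GammaTau A τ) (c : ℝ)
    (β : Fin m → ℝ) :
    (ρ * (c • 1 + ∑ j, β j • A j)).trace = c + ∑ j, β j * τ j := by
  obtain ⟨-, htr, hτ⟩ := hρ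
  simp [mul_add, mul_sum, trace_sum, htr, hτ]

lemma bddAbove_neg_trace_mul_matLog (A : Fin m → Matrix (Fin n) (Fin n) ℝ) (τ : Fin m → ℝ)
    {σ : Matrix (Fin n) (Fin n) ℝ} (hσ : σ.IsHermitian) :
    BddAbove (Set.range fun ρ : GammaTau A τ =>
      -((ρ : Matrix (Fin n) (Fin n) ℝ) * matLog σ).trace) := by
  refine ⟨∑ k, |Real.log (hσ.eigenvalues k)|, ?_⟩
  rintro _ ⟨⟨ρ, hρ, htr, -⟩, rfl⟩
  have hbound : ∀ j, -∑ k, |Real.log (hσ.eigenvalues k)| ≤ Real.log (hσ.eigenvalues j) :=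
    fun j => neg_le_of_abs_le <|
      single_le_sum (f := fun k => |Real.log (hσ.eigenvalues k)|) (fun _ _ => abs_nonneg _)
        (mem_univ j)
  have hlower := hρ.mul_trace_le_trace_mul_cfc hσ hbound
  rw [htr, mul_one, ← matLog_of_isHermitian] at hlower
  exact neg_le.mpr hlower

theorem gibbs_minimax_optimal_general {n m : ℕ} (A : Fin m → Matrix (Fin n) (Fin n) ℝ)
    (τ : Fin m → ℝ)
    (ρτ : Matrix (Fin n) (Fin n) ℝ)
    (hρτmem : ρτ ∈ GammaTau A τ)
    (c : ℝ) (β : Fin m → ℝ)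
    (hgibbs : matLog ρτ = c • (1 : Matrix (Fin n) (Fin n) ℝ) + ∑ j, β j • A j) :
    (⨆ ρ : GammaTau A τ,
        -((ρ : Matrix (Fin n) (Fin n) ℝ) * matLog ρτ).trace) = vnEntropy ρτ ∧
    ∀ σ : Matrix (Fin n) (Fin n) ℝ, σ.PosDef → σ.trace = 1 →
      vnEntropy ρτ ≤ ⨆ ρ : GammaTau A τ,
        -((ρ : Matrix (Fin n) (Fin n) ℝ) * matLog σ).trace := by
  have hconst : ∀ ρ : GammaTau A τ, -((ρ : Matrix (Fin n) (Fin n) ℝ) * matLog ρτ).trace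
      = vnEntropy ρτ := fun ρ => by
    rw [vnEntropy_eq_neg_trace_mul_matLog hρτmem.1.1, hgibbs,
      trace_mul_smul_one_add_sum_of_mem_gammaTau ρ.2,
      trace_mul_smul_one_add_sum_of_mem_gammaTau hρτmem]
  have hne : Nonempty (GammaTau A τ) := ⟨⟨ρτ, hρτmem⟩⟩
  refine ⟨by simp only [hconst, ciSup_const], fun σ hσ hσtr => ?_⟩
  exact (vnEntropy_le_neg_trace_mul_matLog hρτmem.1 hσ hρτmem.2.1 hσtr).trans
    (le_ciSup (bddAbove_neg_trace_mul_matLog A τ hσ.1) ⟨ρτ, hρτmem⟩)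

/-- minimax optimality of the Gibbs state: if ρ_τ ∈ Γ_τ is positive
definite with log ρ_τ = cI + ∑_j β_j A_j, then
sup_{ρ ∈ Γ_τ} (−Tr(ρ log ρ_τ)) = S(ρ_τ), and for every positive definite density matrix
σ, sup_{ρ ∈ Γ_τ} (−Tr(ρ log σ)) ≥ S(ρ_τ). -/
theorem gibbs_minimax_optimal {n m : ℕ} (A : Fin m → Matrix (Fin n) (Fin n) ℝ)
    (hA : ∀ j, (A j).IsSymm) (τ : Fin m → ℝ)
    (ρτ : Matrix (Fin n) (Fin n) ℝ)
    (hρτpd : ρτ.PosDef) (hρτmem : ρτ ∈ GammaTau A τ)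
    (c : ℝ) (β : Fin m → ℝ)
    (hgibbs : matLog ρτ = c • (1 : Matrix (Fin n) (Fin n) ℝ) + ∑ j, β j • A j) :
    (⨆ ρ : GammaTau A τ,
        -((ρ : Matrix (Fin n) (Fin n) ℝ) * matLog ρτ).trace) = vnEntropy ρτ ∧
    ∀ σ : Matrix (Fin n) (Fin n) ℝ, σ.PosDef → σ.trace = 1 →
      vnEntropy ρτ ≤ ⨆ ρ : GammaTau A τ,
        -((ρ : Matrix (Fin n) (Fin n) ℝ) * matLog σ).trace :=
  gibbs_minimax_optimal_general A τ ρτ hρτmem c β hgibbs
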